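/- Fix integers D, d, r ≥ 1, a differentiable state family ρ at θ₀ on ℂ^D and a POVM M on ℂ^d with r outcomes; assume 0 < F^P(ρ₀, ρ₀', M) < ∞. For x ∈ ℝ^r set X = Σᵢ xᵢMᵢ and X₂ = Σᵢ xᵢ²Mᵢ. Then F^P(ρ₀, ρ₀', M)⁻¹ equals the infimum, over pairs (x, Ω) with x ∈ ℝ^r and Ω a positive semidefinite matrix on ℂ^d ⊗ ℂ^D whose partial trace over the ℂ^d factor equals the D×D identity, subject to the constraints Re Tr((X ⊗ ρ₀ᵀ)Ω) = 0 and Re Tr((X ⊗ ρ₀'ᵀ)Ω) = 1, of the quantity Re Tr((X₂ ⊗ ρ₀ᵀ)Ω). (Here ρᵀ denotes the transpose, ⊗ the Kronecker product, and the matrices Ω satisfying the positivity and partial-trace conditions are exactly the Choi matrices of quantum channels from D×D to d×d matrices.) -/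

import Mathlib

open scoped Matrix Kronecker ComplexOrder
open Classical

noncomputable section

/-- A density matrix: positive semidefinite with unit trace. -/
def IsDensityMatrix {n : Type*} [Fintype n] (ρ : Matrix n n ℂ) : Prop :=
  ρ.PosSemidef ∧ ρ.trace = 1

/-- A POVM with `r` outcomes. -/
def IsPOVM {n : Type*} [Fintype n] [DecidableEq n] {r : ℕ}
    (M : Fin r → Matrix n n ℂ) : Prop :=
  (∀ i, (M i).PosSemidef) ∧ ∑ i, M i = 1

/-- The Fisher information of the measurement-outcome distribution. -/
def FisherInfo {n : Type*} [Fintype n] {r : ℕ}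
    (ρ ρ' : Matrix n n ℂ) (M : Fin r → Matrix n n ℂ) : ℝ :=
  ∑ i, if (ρ * M i).trace = 0 then 0
    else ((ρ' * M i).trace.re) ^ 2 / ((ρ * M i).trace.re)

/-- A quantum channel (CPTP map) given by finitely many Kraus operators. -/
def IsQuantumChannel {m n : Type*} [Fintype m] [Fintype n] [DecidableEq m]
    (E : Matrix m m ℂ → Matrix n n ℂ) : Prop :=
  ∃ (κ : ℕ) (K : Fin κ → Matrix n m ℂ),
    (∑ j, (K j)ᴴ * K j = 1) ∧ ∀ σ, E σ = ∑ j, K j * σ * (K j)ᴴ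

/-- Quantum preprocessing-optimized Fisher information. -/
def QPFI {m n : Type*} [Fintype m] [Fintype n] [DecidableEq m] {r : ℕ}
    (ρ ρ' : Matrix m m ℂ) (M : Fin r → Matrix n n ℂ) : ℝ :=
  sSup {x : ℝ | ∃ E : Matrix m m ℂ → Matrix n n ℂ,
    IsQuantumChannel E ∧ x = FisherInfo (E ρ) (E ρ') M}

/-- Quantum unitary-preprocessing-optimized Fisher information. -/
def QUPFI {n : Type*} [Fintype n] [DecidableEq n] {r : ℕ}
    (ρ ρ' : Matrix n n ℂ) (M : Fin r → Matrix n n ℂ) : ℝ :=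
  sSup {x : ℝ | ∃ U : Matrix n n ℂ, U ∈ Matrix.unitaryGroup n ℂ ∧
    x = FisherInfo (U * ρ * Uᴴ) (U * ρ' * Uᴴ) M}

/-- Complex inner product, conjugate-linear in the first argument. -/
def cInner {n : Type*} [Fintype n] (φ ψ : n → ℂ) : ℂ := ∑ k, star (φ k) * ψ k

/-- The functional whose supremum over orthonormal pairs is the normalized QPFI. -/
def gammaSummand {n : Type*} [Fintype n] {r : ℕ}
    (M : Fin r → Matrix n n ℂ) (φ φp : n → ℂ) : ℝ :=
  ∑ i, if cInner φ (M i *ᵥ φ) = 0 then 0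
    else ((cInner φ (M i *ᵥ φp)).re) ^ 2 / ((cInner φ (M i *ᵥ φ)).re)

/-- The normalized QPFI of a POVM. -/
def gammaPOVM {n : Type*} [Fintype n] {r : ℕ} (M : Fin r → Matrix n n ℂ) : ℝ :=
  sSup {x : ℝ | ∃ φ φp : n → ℂ,
    cInner φ φ = 1 ∧ cInner φp φp = 1 ∧ cInner φ φp = 0 ∧ x = gammaSummand M φ φp}

/-- Quantum Fisher information: the Fisher information optimized over all POVMs. -/
def QFI {m : Type*} [Fintype m] [DecidableEq m] (ρ ρ' : Matrix m m ℂ) : ℝ :=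
  sSup {x : ℝ | ∃ (κ : ℕ) (T : Fin κ → Matrix m m ℂ), IsPOVM T ∧ x = FisherInfo ρ ρ' T}

/-- Classical Fisher information of a finite probability distribution. -/
def classFisher {r : ℕ} (p p' : Fin r → ℝ) : ℝ :=
  ∑ i, if p i = 0 then 0 else (p' i) ^ 2 / p i


def choiToE {D d : ℕ} (Ω : Matrix (Fin d × Fin D) (Fin d × Fin D) ℂ)
    (σ : Matrix (Fin D) (Fin D) ℂ) : Matrix (Fin d) (Fin d) ℂ :=
  Matrix.of fun j j' => ∑ k, ∑ k', σ k k' * Ω (j,k) (j',k')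

lemma trace_kron_eq {D d : ℕ} (Ω : Matrix (Fin d × Fin D) (Fin d × Fin D) ℂ)
    (σ : Matrix (Fin D) (Fin D) ℂ) (A : Matrix (Fin d) (Fin d) ℂ) :
    ((A ⊗ₖ σᵀ) * Ω).trace = (choiToE Ω σ * A).trace := by
  simp only [Matrix.trace, Matrix.diag, Matrix.mul_apply, Matrix.kroneckerMap_apply,
    choiToE, Matrix.of_apply, Matrix.transpose_apply, Fintype.sum_prod_type,
    Finset.sum_mul, Finset.mul_sum]
  refine Eq.trans (Finset.sum_congr rfl fun j _ => Finset.sum_comm) ?_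
  refine Eq.trans Finset.sum_comm ?_
  refine Finset.sum_congr rfl fun j' _ => Finset.sum_congr rfl fun j _ =>
    Eq.trans Finset.sum_comm ?_
  exact Finset.sum_congr rfl fun k' _ => Finset.sum_congr rfl fun k _ => by ring

-- I2 : linear form in σ
lemma choiToE_trace_linear {D d : ℕ} (Ω : Matrix (Fin d × Fin D) (Fin d × Fin D) ℂ)
    (σ : Matrix (Fin D) (Fin D) ℂ) (A : Matrix (Fin d) (Fin d) ℂ) :
    (choiToE Ω σ * A).trace
      = ∑ k, ∑ k', σ k k' * (∑ j, ∑ j', Ω (j,k) (j',k') * A j' j) := by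
  simp only [Matrix.trace, Matrix.diag, Matrix.mul_apply, choiToE, Matrix.of_apply,
    Finset.sum_mul, Finset.mul_sum]
  refine Eq.trans (Finset.sum_congr rfl fun j _ => Finset.sum_comm) ?_
  refine Eq.trans Finset.sum_comm ?_
  refine Eq.trans (Finset.sum_congr rfl fun k _ => Finset.sum_congr rfl
    fun j _ => Finset.sum_comm) ?_
  refine Eq.trans (Finset.sum_congr rfl fun k _ => Finset.sum_comm) ?_
  exact Finset.sum_congr rfl fun k _ => Finset.sum_congr rfl fun k' _ =>
    Finset.sum_congr rfl fun j _ => Finset.sum_congr rfl fun j' _ => by ring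

-- trace preservation from partial trace condition
lemma choiToE_trace_preserve {D d : ℕ} (Ω : Matrix (Fin d × Fin D) (Fin d × Fin D) ℂ)
    (hpt : (Matrix.of fun k k' : Fin D => ∑ j : Fin d, Ω (j, k) (j, k'))
      = (1 : Matrix (Fin D) (Fin D) ℂ))
    (σ : Matrix (Fin D) (Fin D) ℂ) : (choiToE Ω σ).trace = σ.trace := by
  have h : ∀ k k' : Fin D, ∑ j : Fin d, Ω (j, k) (j, k')
      = (1 : Matrix (Fin D) (Fin D) ℂ) k k' := fun k k' => by
    rw [← hpt]; rfl
  simp only [Matrix.trace, Matrix.diag, choiToE, Matrix.of_apply]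
  refine Eq.trans Finset.sum_comm ?_
  calc ∑ k, ∑ j, ∑ k', σ k k' * Ω (j,k) (j,k')
      = ∑ k, ∑ k', σ k k' * ∑ j, Ω (j,k) (j,k') := by
        refine Finset.sum_congr rfl fun k _ => Eq.trans Finset.sum_comm ?_
        exact Finset.sum_congr rfl fun k' _ => (Finset.mul_sum _ _ _).symm
    _ = ∑ k, σ k k := by
        refine Finset.sum_congr rfl fun k _ => ?_
        rw [Finset.sum_eq_single k]
        · rw [h k k, Matrix.one_apply_eq, mul_one]
        · intro k' _ hk'; rw [h k k', Matrix.one_apply_ne (Ne.symm hk'), mul_zero]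
        · intro h'; exact absurd (Finset.mem_univ k) h'

open scoped MatrixOrder in
lemma posSemidef_eq_conjTranspose_mul_self' {n : Type*} [Fintype n] [DecidableEq n]
    {A : Matrix n n ℂ} (hA : A.PosSemidef) : ∃ B : Matrix n n ℂ, A = Bᴴ * B := by
  obtain ⟨B, rfl⟩ := CStarAlgebra.nonneg_iff_eq_star_mul_self.mp hA.nonneg
  exact ⟨B, rfl⟩

lemma isQuantumChannel_choiToE {D d : ℕ} {Ω : Matrix (Fin d × Fin D) (Fin d × Fin D) ℂ}
    (hΩ : Ω.PosSemidef)
    (hpt : (Matrix.of fun k k' : Fin D => ∑ j : Fin d, Ω (j, k) (j, k'))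
      = (1 : Matrix (Fin D) (Fin D) ℂ)) :
    IsQuantumChannel (choiToE Ω) := by
  obtain ⟨B, hB⟩ := posSemidef_eq_conjTranspose_mul_self' hΩ
  have hΩapp : ∀ a b, Ω a b = ∑ p, star (B p a) * B p b := by
    intro a b; rw [hB]; simp [Matrix.mul_apply, Matrix.conjTranspose_apply]
  have hherm : ∀ a b, star (Ω a b) = Ω b a := fun a b => by
    conv_rhs => rw [← hΩ.1]
    simp [Matrix.conjTranspose_apply]
  refine ⟨d * D, fun m => Matrix.of fun j k =>
    star (B (finProdFinEquiv.symm m) (j, k)), ?_, ?_⟩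
  · ext k k'
    have h1 : ∀ p : Fin d × Fin D, ∑ j, B p (j,k) * star (B p (j,k'))
        = ∑ j, B p (j,k) * star (B p (j,k')) := fun _ => rfl
    calc (∑ m, ((Matrix.of fun j k => star (B (finProdFinEquiv.symm m) (j, k)))ᴴ
            * (Matrix.of fun j k => star (B (finProdFinEquiv.symm m) (j, k)))) : Matrix _ _ ℂ) k k'
        = ∑ m, ∑ j, B (finProdFinEquiv.symm m) (j,k) * star (B (finProdFinEquiv.symm m) (j,k')) := by
          simp [Matrix.sum_apply, Matrix.mul_apply, Matrix.conjTranspose_apply]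
      _ = ∑ p, ∑ j, B p (j,k) * star (B p (j,k')) :=
          Equiv.sum_comp finProdFinEquiv.symm
            (fun p => ∑ j, B p (j,k) * star (B p (j,k')))
      _ = ∑ j, ∑ p, B p (j,k) * star (B p (j,k')) := Finset.sum_comm
      _ = ∑ j : Fin d, star (Ω (j,k) (j,k')) := by
          refine Finset.sum_congr rfl fun j _ => ?_
          rw [hΩapp]
          rw [star_sum]
          exact Finset.sum_congr rfl fun p _ => by
            simp [mul_comm]
      _ = star (∑ j : Fin d, Ω (j,k) (j,k')) := (star_sum _ _).symm
      _ = (1 : Matrix (Fin D) (Fin D) ℂ) k k' := by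
          have := congrFun (congrFun hpt k) k'
          simp only [Matrix.of_apply] at this
          rw [this]
          by_cases h : k = k' <;> simp [Matrix.one_apply, h]
  · intro σ
    ext j j'
    calc (choiToE Ω σ) j j' = ∑ k, ∑ k', σ k k' * Ω (j,k) (j',k') := rfl
      _ = ∑ k, ∑ k', σ k k' * ∑ p, star (B p (j,k)) * B p (j',k') := by
          refine Finset.sum_congr rfl fun k _ => Finset.sum_congr rfl fun k' _ => by rw [hΩapp]
      _ = ∑ k, ∑ k', ∑ p, star (B p (j,k)) * σ k k' * B p (j',k') := by
          refine Finset.sum_congr rfl fun k _ => Finset.sum_congr rfl fun k' _ => ?_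
          rw [Finset.mul_sum]
          exact Finset.sum_congr rfl fun p _ => by ring
      _ = ∑ k, ∑ p, ∑ k', star (B p (j,k)) * σ k k' * B p (j',k') :=
          Finset.sum_congr rfl fun k _ => Finset.sum_comm
      _ = ∑ p, ∑ k, ∑ k', star (B p (j,k)) * σ k k' * B p (j',k') := Finset.sum_comm
      _ = ∑ m, ∑ k, ∑ k', star (B (finProdFinEquiv.symm m) (j,k)) * σ k k'
            * B (finProdFinEquiv.symm m) (j',k') :=
          (Equiv.sum_comp finProdFinEquiv.symm
            (fun p => ∑ k, ∑ k', star (B p (j,k)) * σ k k' * B p (j',k'))).symm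
      _ = (∑ m, (Matrix.of fun j k => star (B (finProdFinEquiv.symm m) (j, k))) * σ
            * (Matrix.of fun j k => star (B (finProdFinEquiv.symm m) (j, k)))ᴴ) j j' := by
          simp only [Matrix.sum_apply, Matrix.mul_apply, Matrix.conjTranspose_apply,
            Matrix.of_apply, Finset.sum_mul, star_star]
          exact Finset.sum_congr rfl fun m _ => Finset.sum_comm

lemma exists_choi_of_kraus {D d : ℕ} {κ : ℕ} (K : Fin κ → Matrix (Fin d) (Fin D) ℂ)
    (hK : ∑ m, (K m)ᴴ * K m = 1) :
    ∃ Ω : Matrix (Fin d × Fin D) (Fin d × Fin D) ℂ, Ω.PosSemidef ∧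
      (Matrix.of fun k k' : Fin D => ∑ j : Fin d, Ω (j, k) (j, k'))
        = (1 : Matrix (Fin D) (Fin D) ℂ) ∧
      ∀ σ, choiToE Ω σ = ∑ m, K m * σ * (K m)ᴴ := by
  set C : Matrix (Fin κ) (Fin d × Fin D) ℂ :=
    Matrix.of (fun m a => star (K m a.1 a.2)) with hC
  refine ⟨Cᴴ * C, Matrix.posSemidef_conjTranspose_mul_self C, ?_, ?_⟩
  · ext k k'
    have happ : ∀ a b, (Cᴴ * C) a b = ∑ m, K m a.1 a.2 * star (K m b.1 b.2) := by
      intro a b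
      simp [Matrix.mul_apply, Matrix.conjTranspose_apply, hC, mul_comm]
    simp only [Matrix.of_apply]
    calc ∑ j, (Cᴴ * C) (j, k) (j, k')
        = ∑ j, ∑ m, K m j k * star (K m j k') := by
          exact Finset.sum_congr rfl fun j _ => happ _ _
      _ = ∑ m, ∑ j, K m j k * star (K m j k') := Finset.sum_comm
      _ = ∑ m, star (((K m)ᴴ * K m) k k') := by
          refine Finset.sum_congr rfl fun m _ => ?_
          simp [Matrix.mul_apply, Matrix.conjTranspose_apply, mul_comm]
      _ = star ((∑ m, (K m)ᴴ * K m) k k') := by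
          rw [Matrix.sum_apply]; exact (star_sum _ _).symm
      _ = (1 : Matrix (Fin D) (Fin D) ℂ) k k' := by
          rw [hK]; by_cases h : k = k' <;> simp [Matrix.one_apply, h]
  · intro σ
    ext j j'
    have happ : ∀ a b, (Cᴴ * C) a b = ∑ m, K m a.1 a.2 * star (K m b.1 b.2) := by
      intro a b
      simp [Matrix.mul_apply, Matrix.conjTranspose_apply, hC, mul_comm]
    calc (choiToE (Cᴴ * C) σ) j j'
        = ∑ k, ∑ k', σ k k' * ∑ m, K m j k * star (K m j' k') := by
          simp only [choiToE, Matrix.of_apply]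
          refine Finset.sum_congr rfl fun k _ => Finset.sum_congr rfl fun k' _ => ?_
          rw [happ]
      _ = ∑ k, ∑ k', ∑ m, K m j k * σ k k' * star (K m j' k') := by
          refine Finset.sum_congr rfl fun k _ => Finset.sum_congr rfl fun k' _ => ?_
          rw [Finset.mul_sum]
          exact Finset.sum_congr rfl fun m _ => by ring
      _ = ∑ k, ∑ m, ∑ k', K m j k * σ k k' * star (K m j' k') :=
          Finset.sum_congr rfl fun k _ => Finset.sum_comm
      _ = ∑ m, ∑ k, ∑ k', K m j k * σ k k' * star (K m j' k') := Finset.sum_comm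
      _ = (∑ m, K m * σ * (K m)ᴴ) j j' := by
          simp only [Matrix.sum_apply, Matrix.mul_apply, Matrix.conjTranspose_apply,
            Finset.sum_mul]
          exact Finset.sum_congr rfl fun m _ => Finset.sum_comm

lemma psd_diag_nonneg {n : Type*} [Fintype n] [DecidableEq n] {M : Matrix n n ℂ}
    (hM : M.PosSemidef) (a : n) : 0 ≤ M a a := by
  exact hM.diag_nonneg

lemma trace_mul_psd_real {n : Type*} [Fintype n] [DecidableEq n]
    {A B : Matrix n n ℂ} (hA : A.PosSemidef) (hB : B.PosSemidef) :
    (((A * B).trace.re : ℂ) = (A * B).trace) ∧ 0 ≤ (A * B).trace.re := by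
  obtain ⟨C, rfl⟩ := posSemidef_eq_conjTranspose_mul_self' hB
  have h1 : (A * (Cᴴ * C)).trace = (C * A * Cᴴ).trace := by
    rw [← mul_assoc, Matrix.trace_mul_comm, ← mul_assoc]
  have hpsd : (C * A * Cᴴ).PosSemidef := hA.mul_mul_conjTranspose_same C
  have h2 : 0 ≤ (C * A * Cᴴ).trace :=
    Finset.sum_nonneg fun a _ => psd_diag_nonneg hpsd a
  rw [Complex.le_def] at h2
  simp only [Complex.zero_re, Complex.zero_im] at h2
  constructor
  · rw [h1]; exact Complex.ext (by simp) (by simp [h2.2.symm])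
  · rw [h1]; exact h2.1

lemma psd_sum {ι : Type*} {n : Type*} [Fintype n] (s : Finset ι)
    (f : ι → Matrix n n ℂ) (h : ∀ i ∈ s, (f i).PosSemidef) :
    (∑ i ∈ s, f i).PosSemidef := by
  classical
  induction s using Finset.induction_on with
  | empty => simpa using Matrix.PosSemidef.zero
  | insert _ _ hns ih =>
    rw [Finset.sum_insert hns]
    exact (h _ (Finset.mem_insert_self _ _)).add
      (ih fun i hi => h i (Finset.mem_insert_of_mem hi))

lemma hasDerivAt_re {f : ℝ → ℂ} {f' : ℂ} {x : ℝ} (h : HasDerivAt f f' x) :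
    HasDerivAt (fun t => (f t).re) f'.re x := by
  exact (Complex.reCLM.hasFDerivAt.comp_hasDerivAt x h)

lemma hasDerivAt_trace_choiToE {D d : ℕ} (Ω : Matrix (Fin d × Fin D) (Fin d × Fin D) ℂ)
    (A : Matrix (Fin d) (Fin d) ℂ) (ρ : ℝ → Matrix (Fin D) (Fin D) ℂ)
    (ρ' : Matrix (Fin D) (Fin D) ℂ) (θ₀ : ℝ)
    (hder : ∀ i j, HasDerivAt (fun θ => ρ θ i j) (ρ' i j) θ₀) :
    HasDerivAt (fun θ => ((choiToE Ω (ρ θ) * A).trace).re)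
      ((choiToE Ω ρ' * A).trace).re θ₀ := by
  have key : ∀ σ, (choiToE Ω σ * A).trace
      = ∑ k, ∑ k', σ k k' * (∑ j, ∑ j', Ω (j,k) (j',k') * A j' j) :=
    fun σ => choiToE_trace_linear Ω σ A
  simp only [key]
  apply hasDerivAt_re
  apply HasDerivAt.fun_sum
  intro k _
  apply HasDerivAt.fun_sum
  intro k' _
  exact (hder k k').mul_const _

lemma kron_sum_smul_trace {D d r : ℕ} (Ω : Matrix (Fin d × Fin D) (Fin d × Fin D) ℂ)
    (σ : Matrix (Fin D) (Fin D) ℂ) (M : Fin r → Matrix (Fin d) (Fin d) ℂ)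
    (c : Fin r → ℂ) :
    (((∑ i, c i • M i) ⊗ₖ σᵀ) * Ω).trace = ∑ i, c i * (choiToE Ω σ * M i).trace := by
  rw [trace_kron_eq]
  rw [Matrix.mul_sum, Matrix.trace_sum]
  refine Finset.sum_congr rfl fun i _ => ?_
  rw [Matrix.mul_smul, Matrix.trace_smul, smul_eq_mul]

lemma kron_re {D d r : ℕ} (Ω : Matrix (Fin d × Fin D) (Fin d × Fin D) ℂ)
    (σ : Matrix (Fin D) (Fin D) ℂ) (M : Fin r → Matrix (Fin d) (Fin d) ℂ)
    (c : Fin r → ℝ) :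
    (((∑ i, (c i : ℂ) • M i) ⊗ₖ σᵀ) * Ω).trace.re
      = ∑ i, c i * ((choiToE Ω σ * M i).trace).re := by
  rw [kron_sum_smul_trace, Complex.re_sum]
  exact Finset.sum_congr rfl fun i _ => by simp [Complex.mul_re]



lemma choiToE_psd {D d : ℕ} {Ω : Matrix (Fin d × Fin D) (Fin d × Fin D) ℂ}
    {κ : ℕ} {K : Fin κ → Matrix (Fin d) (Fin D) ℂ}
    (hrep : ∀ σ, choiToE Ω σ = ∑ m, K m * σ * (K m)ᴴ)
    {σ : Matrix (Fin D) (Fin D) ℂ} (hσ : σ.PosSemidef) :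
    (choiToE Ω σ).PosSemidef := by
  rw [hrep]
  exact psd_sum _ _ fun m _ => hσ.mul_mul_conjTranspose_same (K m)

/-- trace of ρ' vanishes -/
lemma trace_deriv_zero {D : ℕ} (ρ : ℝ → Matrix (Fin D) (Fin D) ℂ)
    (ρ' : Matrix (Fin D) (Fin D) ℂ) (θ₀ : ℝ)
    (hdens : ∀ θ, IsDensityMatrix (ρ θ))
    (hder : ∀ i j, HasDerivAt (fun θ => ρ θ i j) (ρ' i j) θ₀) :
    ρ'.trace = 0 := by
  have h1 : HasDerivAt (fun θ => (ρ θ).trace) ρ'.trace θ₀ := by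
    simp only [Matrix.trace, Matrix.diag]
    exact HasDerivAt.fun_sum fun k _ => hder k k
  have h2 : (fun θ => (ρ θ).trace) = fun _ => (1 : ℂ) := funext fun θ => (hdens θ).2
  rw [h2] at h1
  exact h1.unique (hasDerivAt_const _ _)

/-- if p i = 0 then q i = 0 -/
lemma deriv_vanish {D d : ℕ} {Ω : Matrix (Fin d × Fin D) (Fin d × Fin D) ℂ}
    {κ : ℕ} {K : Fin κ → Matrix (Fin d) (Fin D) ℂ}
    (hrep : ∀ σ, choiToE Ω σ = ∑ m, K m * σ * (K m)ᴴ)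
    (ρ : ℝ → Matrix (Fin D) (Fin D) ℂ) (ρ' : Matrix (Fin D) (Fin D) ℂ) (θ₀ : ℝ)
    (hdens : ∀ θ, IsDensityMatrix (ρ θ))
    (hder : ∀ i j, HasDerivAt (fun θ => ρ θ i j) (ρ' i j) θ₀)
    (A : Matrix (Fin d) (Fin d) ℂ) (hA : A.PosSemidef)
    (hp0 : ((choiToE Ω (ρ θ₀) * A).trace).re = 0) :
    ((choiToE Ω ρ' * A).trace).re = 0 := by
  have hmin : IsLocalMin (fun θ => ((choiToE Ω (ρ θ) * A).trace).re) θ₀ := by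
    apply Filter.Eventually.of_forall
    intro θ
    simp only [hp0]
    exact (trace_mul_psd_real (choiToE_psd hrep (hdens θ).1) hA).2
  exact hmin.hasDerivAt_eq_zero (hasDerivAt_trace_choiToE Ω A ρ ρ' θ₀ hder)


lemma fisher_eq_filter {n : Type*} [Fintype n] {r : ℕ}
    (ρ ρ' : Matrix n n ℂ) (M : Fin r → Matrix n n ℂ)
    (hreal : ∀ i, (((ρ * M i).trace.re : ℂ)) = (ρ * M i).trace) :
    FisherInfo ρ ρ' M = ∑ i ∈ Finset.univ.filter (fun i => (ρ * M i).trace.re ≠ 0),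
      ((ρ' * M i).trace.re) ^ 2 / (ρ * M i).trace.re := by
  rw [FisherInfo, Finset.sum_filter]
  refine Finset.sum_congr rfl fun i _ => ?_
  have : (ρ * M i).trace = 0 ↔ (ρ * M i).trace.re = 0 := by
    rw [← hreal i]; exact Complex.ofReal_eq_zero
  by_cases h : (ρ * M i).trace.re = 0 <;> simp [h, this]

lemma cs_core {D d r : ℕ}
    (ρ : ℝ → Matrix (Fin D) (Fin D) ℂ) (ρ' : Matrix (Fin D) (Fin D) ℂ) (θ₀ : ℝ)
    (hdens : ∀ θ, IsDensityMatrix (ρ θ))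
    (hder : ∀ i j, HasDerivAt (fun θ => ρ θ i j) (ρ' i j) θ₀)
    (M : Fin r → Matrix (Fin d) (Fin d) ℂ) (hM : IsPOVM M)
    (Ω : Matrix (Fin d × Fin D) (Fin d × Fin D) ℂ) (hΩ : Ω.PosSemidef)
    (hpt : (Matrix.of fun k k' : Fin D => ∑ j : Fin d, Ω (j, k) (j, k'))
      = (1 : Matrix (Fin D) (Fin D) ℂ))
    (x : Fin r → ℝ)
    (hc2 : (((∑ i, (x i : ℂ) • M i) ⊗ₖ ρ'ᵀ) * Ω).trace.re = 1) :
    0 ≤ (((∑ i, ((x i : ℂ)) ^ 2 • M i) ⊗ₖ (ρ θ₀)ᵀ) * Ω).trace.re ∧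
    1 ≤ (((∑ i, ((x i : ℂ)) ^ 2 • M i) ⊗ₖ (ρ θ₀)ᵀ) * Ω).trace.re
        * FisherInfo (choiToE Ω (ρ θ₀)) (choiToE Ω ρ') M := by
  obtain ⟨κ, K, hK1, hK2⟩ := isQuantumChannel_choiToE hΩ hpt
  set p : Fin r → ℝ := fun i => ((choiToE Ω (ρ θ₀) * M i).trace).re with hp
  set q : Fin r → ℝ := fun i => ((choiToE Ω ρ' * M i).trace).re with hq
  have hreal : ∀ i, (((p i : ℝ)) : ℂ) = (choiToE Ω (ρ θ₀) * M i).trace ∧ 0 ≤ p i :=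
    fun i => trace_mul_psd_real (choiToE_psd hK2 (hdens θ₀).1) (hM.1 i)
  have hvanish : ∀ i, p i = 0 → q i = 0 :=
    fun i h => deriv_vanish hK2 ρ ρ' θ₀ hdens hder (M i) (hM.1 i) h
  have hsq : (∑ i, ((x i : ℂ)) ^ 2 • M i) = ∑ i, ((x i ^ 2 : ℝ) : ℂ) • M i := by
    refine Finset.sum_congr rfl fun i _ => ?_; push_cast; ring_nf
  have hy : (((∑ i, ((x i : ℂ)) ^ 2 • M i) ⊗ₖ (ρ θ₀)ᵀ) * Ω).trace.re
      = ∑ i, x i ^ 2 * p i := by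
    rw [hsq, kron_re]
  have hc2' : ∑ i, x i * q i = 1 := by rw [← kron_re Ω ρ' M x, hc2]
  have hynn : 0 ≤ ∑ i, x i ^ 2 * p i :=
    Finset.sum_nonneg fun i _ => mul_nonneg (sq_nonneg _) (hreal i).2
  set s := Finset.univ.filter (fun i => p i ≠ 0) with hs
  have hF : FisherInfo (choiToE Ω (ρ θ₀)) (choiToE Ω ρ') M
      = ∑ i ∈ s, (q i) ^ 2 / p i := fisher_eq_filter _ _ _ fun i => (hreal i).1
  have hFnn : 0 ≤ ∑ i ∈ s, (q i) ^ 2 / p i :=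
    Finset.sum_nonneg fun i hi => div_nonneg (sq_nonneg _)
      (hreal i).2
  have hsum1 : ∑ i ∈ s, x i * q i = 1 := by
    rw [← hc2']
    refine Finset.sum_filter_of_ne fun i _ h => ?_
    intro h0
    exact h (by rw [hvanish i h0, mul_zero])
  have hCS : (∑ i ∈ s, x i * q i) ^ 2
      ≤ (∑ i ∈ s, x i ^ 2 * p i) * ∑ i ∈ s, (q i) ^ 2 / p i := by
    refine Finset.sum_sq_le_sum_mul_sum_of_sq_eq_mul s
      (fun i _ => mul_nonneg (sq_nonneg _) (hreal i).2)
      (fun i hi => div_nonneg (sq_nonneg _) (hreal i).2)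
      (fun i hi => ?_)
    have hpne : p i ≠ 0 := (Finset.mem_filter.mp hi).2
    field_simp
  rw [hsum1, one_pow] at hCS
  have hsub : (∑ i ∈ s, x i ^ 2 * p i) ≤ ∑ i, x i ^ 2 * p i :=
    Finset.sum_le_sum_of_subset_of_nonneg (Finset.filter_subset _ _)
      (fun i _ _ => mul_nonneg (sq_nonneg _) (hreal i).2)
  refine ⟨by rw [hy]; exact hynn, ?_⟩
  rw [hy, hF]
  calc (1:ℝ) ≤ (∑ i ∈ s, x i ^ 2 * p i) * ∑ i ∈ s, (q i) ^ 2 / p i := hCS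
    _ ≤ (∑ i, x i ^ 2 * p i) * ∑ i ∈ s, (q i) ^ 2 / p i :=
        mul_le_mul_of_nonneg_right hsub hFnn

lemma fisher_eq_ite {n : Type*} [Fintype n] {r : ℕ}
    (ρ ρ' : Matrix n n ℂ) (M : Fin r → Matrix n n ℂ)
    (hreal : ∀ i, (((ρ * M i).trace.re : ℂ)) = (ρ * M i).trace) :
    FisherInfo ρ ρ' M = ∑ i, if (ρ * M i).trace.re = 0 then 0
      else ((ρ' * M i).trace.re) ^ 2 / (ρ * M i).trace.re := by
  rw [FisherInfo]
  refine Finset.sum_congr rfl fun i _ => ?_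
  have : (ρ * M i).trace = 0 ↔ (ρ * M i).trace.re = 0 := by
    rw [← hreal i]; exact Complex.ofReal_eq_zero
  by_cases h : (ρ * M i).trace.re = 0 <;> simp [h, this]

lemma construct_mem {D d r : ℕ}
    (ρ : ℝ → Matrix (Fin D) (Fin D) ℂ) (ρ' : Matrix (Fin D) (Fin D) ℂ) (θ₀ : ℝ)
    (hdens : ∀ θ, IsDensityMatrix (ρ θ))
    (hder : ∀ i j, HasDerivAt (fun θ => ρ θ i j) (ρ' i j) θ₀)
    (M : Fin r → Matrix (Fin d) (Fin d) ℂ) (hM : IsPOVM M)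
    (E : Matrix (Fin D) (Fin D) ℂ → Matrix (Fin d) (Fin d) ℂ)
    (hE : IsQuantumChannel E)
    (hF : 0 < FisherInfo (E (ρ θ₀)) (E ρ') M) :
    ∃ (x : Fin r → ℝ) (Ω : Matrix (Fin d × Fin D) (Fin d × Fin D) ℂ),
      Ω.PosSemidef ∧
      (Matrix.of fun k k' : Fin D => ∑ j : Fin d, Ω (j, k) (j, k'))
        = (1 : Matrix (Fin D) (Fin D) ℂ) ∧
      (((∑ i, (x i : ℂ) • M i) ⊗ₖ (ρ θ₀)ᵀ) * Ω).trace.re = 0 ∧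
      (((∑ i, (x i : ℂ) • M i) ⊗ₖ ρ'ᵀ) * Ω).trace.re = 1 ∧
      (((∑ i, ((x i : ℂ)) ^ 2 • M i) ⊗ₖ (ρ θ₀)ᵀ) * Ω).trace.re
        = (FisherInfo (E (ρ θ₀)) (E ρ') M)⁻¹ := by
  obtain ⟨κ, K, hK1, hK2⟩ := hE
  obtain ⟨Ω, hΩ, hpt, hrep⟩ := exists_choi_of_kraus K hK1
  have hEeq : ∀ σ, E σ = choiToE Ω σ := fun σ => by rw [hK2, hrep]
  have hrep' : ∀ σ, choiToE Ω σ = ∑ m, K m * σ * (K m)ᴴ := hrep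
  set p : Fin r → ℝ := fun i => ((choiToE Ω (ρ θ₀) * M i).trace).re with hp
  set q : Fin r → ℝ := fun i => ((choiToE Ω ρ' * M i).trace).re with hq
  set F : ℝ := FisherInfo (E (ρ θ₀)) (E ρ') M with hFdef
  have hreal : ∀ i, (((p i : ℝ)) : ℂ) = (choiToE Ω (ρ θ₀) * M i).trace ∧ 0 ≤ p i :=
    fun i => trace_mul_psd_real (choiToE_psd hrep' (hdens θ₀).1) (hM.1 i)
  have hvanish : ∀ i, p i = 0 → q i = 0 :=
    fun i h => deriv_vanish hrep' ρ ρ' θ₀ hdens hder (M i) (hM.1 i) h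
  have hFalt : F = ∑ i, if p i = 0 then 0 else (q i) ^ 2 / p i := by
    rw [hFdef, hEeq, hEeq]
    exact fisher_eq_ite _ _ _ fun i => (hreal i).1
  have hFne : F ≠ 0 := ne_of_gt hF
  -- sum of q is zero
  have hqsum : ∑ i, q i = 0 := by
    have h1 : ∑ i, (choiToE Ω ρ' * M i).trace = ρ'.trace := by
      rw [← Matrix.trace_sum]
      rw [← Matrix.mul_sum, hM.2, mul_one]
      exact choiToE_trace_preserve Ω hpt ρ'
    have h2 : ρ'.trace = 0 := trace_deriv_zero ρ ρ' θ₀ hdens hder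
    calc ∑ i, q i = (∑ i, (choiToE Ω ρ' * M i).trace).re := by rw [Complex.re_sum]
      _ = 0 := by rw [h1, h2]; simp
  set x : Fin r → ℝ := fun i => if p i = 0 then 0 else q i / (p i * F) with hx
  refine ⟨x, Ω, hΩ, hpt, ?_, ?_, ?_⟩
  · rw [kron_re]
    have : ∀ i, x i * p i = q i / F := by
      intro i
      by_cases h : p i = 0
      · simp [hx, h, hvanish i h]
      · simp only [hx, if_neg h]; field_simp
    refine Eq.trans (Finset.sum_congr rfl fun i _ => this i) ?_
    rw [← Finset.sum_div, hqsum, zero_div]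
  · rw [kron_re]
    have : ∀ i, x i * q i = (if p i = 0 then 0 else (q i) ^ 2 / p i) / F := by
      intro i
      by_cases h : p i = 0
      · simp [hx, h]
      · simp only [hx, if_neg h]; field_simp
    refine Eq.trans (Finset.sum_congr rfl fun i _ => this i) ?_
    rw [← Finset.sum_div, ← hFalt, div_self hFne]
  · have hsq : (∑ i, ((x i : ℂ)) ^ 2 • M i) = ∑ i, ((x i ^ 2 : ℝ) : ℂ) • M i := by
      refine Finset.sum_congr rfl fun i _ => ?_; push_cast; ring_nf
    rw [hsq, kron_re]
    have : ∀ i, x i ^ 2 * p i = (if p i = 0 then 0 else (q i) ^ 2 / p i) / F ^ 2 := by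
      intro i
      by_cases h : p i = 0
      · simp [hx, h]
      · simp only [hx, if_neg h]; field_simp
    refine Eq.trans (Finset.sum_congr rfl fun i _ => this i) ?_
    rw [← Finset.sum_div, ← hFalt]
    rw [sq]
    field_simp



/-- the biconvex formulation of the QPFI in terms of error vectors and Choi
matrices: the inverse QPFI equals the infimum of `Re Tr((X₂ ⊗ ρ₀ᵀ)Ω)` over error vectors `x`
and Choi matrices `Ω` satisfying the local unbiasedness constraints. -/
theorem stmt3 {D d r : ℕ} (hD : 1 ≤ D) (hd : 1 ≤ d) (hr : 1 ≤ r)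
    (ρ : ℝ → Matrix (Fin D) (Fin D) ℂ) (ρ' : Matrix (Fin D) (Fin D) ℂ) (θ₀ : ℝ)
    (hdens : ∀ θ, IsDensityMatrix (ρ θ))
    (hder : ∀ i j, HasDerivAt (fun θ => ρ θ i j) (ρ' i j) θ₀)
    (M : Fin r → Matrix (Fin d) (Fin d) ℂ) (hM : IsPOVM M)
    (hpos : 0 < QPFI (ρ θ₀) ρ' M)
    (hfin : BddAbove {x : ℝ | ∃ E : Matrix (Fin D) (Fin D) ℂ → Matrix (Fin d) (Fin d) ℂ,
      IsQuantumChannel E ∧ x = FisherInfo (E (ρ θ₀)) (E ρ') M}) :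
    (QPFI (ρ θ₀) ρ' M)⁻¹ =
      sInf {y : ℝ | ∃ (x : Fin r → ℝ) (Ω : Matrix (Fin d × Fin D) (Fin d × Fin D) ℂ),
        Ω.PosSemidef ∧
        (Matrix.of fun k k' : Fin D => ∑ j : Fin d, Ω (j, k) (j, k'))
          = (1 : Matrix (Fin D) (Fin D) ℂ) ∧
        (((∑ i, (x i : ℂ) • M i) ⊗ₖ (ρ θ₀)ᵀ) * Ω).trace.re = 0 ∧
        (((∑ i, (x i : ℂ) • M i) ⊗ₖ ρ'ᵀ) * Ω).trace.re = 1 ∧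
        y = (((∑ i, ((x i : ℂ)) ^ 2 • M i) ⊗ₖ (ρ θ₀)ᵀ) * Ω).trace.re} := by
  set T : Set ℝ := {x : ℝ | ∃ E : Matrix (Fin D) (Fin D) ℂ → Matrix (Fin d) (Fin d) ℂ,
      IsQuantumChannel E ∧ x = FisherInfo (E (ρ θ₀)) (E ρ') M} with hT
  set S : Set ℝ := {y : ℝ | ∃ (x : Fin r → ℝ) (Ω : Matrix (Fin d × Fin D) (Fin d × Fin D) ℂ),
        Ω.PosSemidef ∧
        (Matrix.of fun k k' : Fin D => ∑ j : Fin d, Ω (j, k) (j, k'))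
          = (1 : Matrix (Fin D) (Fin D) ℂ) ∧
        (((∑ i, (x i : ℂ) • M i) ⊗ₖ (ρ θ₀)ᵀ) * Ω).trace.re = 0 ∧
        (((∑ i, (x i : ℂ) • M i) ⊗ₖ ρ'ᵀ) * Ω).trace.re = 1 ∧
        y = (((∑ i, ((x i : ℂ)) ^ 2 • M i) ⊗ₖ (ρ θ₀)ᵀ) * Ω).trace.re} with hS
  have hQ : QPFI (ρ θ₀) ρ' M = sSup T := rfl
  rw [hQ] at hpos ⊢
  have hTne : T.Nonempty := by
    by_contra h
    rw [Set.not_nonempty_iff_eq_empty] at h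
    rw [h, Real.sSup_empty] at hpos
    exact lt_irrefl 0 hpos
  -- Lower bound : (sSup T)⁻¹ ≤ y for all y ∈ S
  have lb : ∀ y ∈ S, (sSup T)⁻¹ ≤ y := by
    rintro y ⟨x, Ω, hΩ, hpt, h1, h2, rfl⟩
    obtain ⟨hynn, hyF⟩ := cs_core ρ ρ' θ₀ hdens hder M hM Ω hΩ hpt x h2
    have hmem : FisherInfo (choiToE Ω (ρ θ₀)) (choiToE Ω ρ') M ∈ T :=
      ⟨choiToE Ω, isQuantumChannel_choiToE hΩ hpt, rfl⟩
    have hFle : FisherInfo (choiToE Ω (ρ θ₀)) (choiToE Ω ρ') M ≤ sSup T :=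
      le_csSup hfin hmem
    have h1y : 1 ≤ (((∑ i, ((x i : ℂ)) ^ 2 • M i) ⊗ₖ (ρ θ₀)ᵀ) * Ω).trace.re * sSup T :=
      le_trans hyF (mul_le_mul_of_nonneg_left hFle hynn)
    rw [inv_eq_one_div]
    rw [div_le_iff₀ hpos]
    exact h1y
  have hSbdd : BddBelow S := ⟨(sSup T)⁻¹, lb⟩
  -- construct memberships of S from channels with positive Fisher info
  have con : ∀ F ∈ T, 0 < F → F⁻¹ ∈ S := by
    rintro F ⟨E, hE, rfl⟩ hFpos
    obtain ⟨x, Ω, hΩ, hpt, h1, h2, hy⟩ :=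
      construct_mem ρ ρ' θ₀ hdens hder M hM E hE hFpos
    exact ⟨x, Ω, hΩ, hpt, h1, h2, hy.symm⟩
  have hSne : S.Nonempty := by
    obtain ⟨F₀, hF₀T, hF₀pos⟩ := exists_lt_of_lt_csSup hTne hpos
    exact ⟨F₀⁻¹, con F₀ hF₀T hF₀pos⟩
  have le₁ : (sSup T)⁻¹ ≤ sInf S := le_csInf hSne lb
  have hInfpos : 0 < sInf S := lt_of_lt_of_le (inv_pos.mpr hpos) le₁
  have le₂ : sSup T ≤ (sInf S)⁻¹ := by
    refine csSup_le hTne fun F hFT => ?_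
    by_cases hFpos : 0 < F
    · have hmemS : F⁻¹ ∈ S := con F hFT hFpos
      have hle : sInf S ≤ F⁻¹ := csInf_le hSbdd hmemS
      have := one_div_le_one_div_of_le hInfpos hle
      rwa [one_div, one_div, inv_inv] at this
    · push_neg at hFpos
      exact le_trans hFpos (le_of_lt (inv_pos.mpr hInfpos))
  refine le_antisymm le₁ ?_
  have := one_div_le_one_div_of_le hpos le₂
  rwa [one_div, one_div, inv_inv] at this
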